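/- Let (R,B) be a fusion ring admitting a fixed-point-free automorphism φ of prime order p. Then FPdim(x) is a rational integer for every x ∈ B, and FPdim(R) := Σ_{x∈B} FPdim(x)² ≡ 1 (mod p). -/

import Mathlib

/-!
For multiplicative functions `χ, ψ` on the basis, Frobenius reciprocity gives
`χ a * ⟪χ, ψ⟫ = ψ a * ⟪χ, ψ⟫` for the pairing `⟪χ, ψ⟫ = ∑ i, χ i * ψ i*`, so `χ ≠ ψ` forces
`⟪χ, ψ⟫ = 0`. If `χ` and `ψ` are characters fixed by `φ`, the summands of the pairing are
constant on `φ`-orbits, which all have size `p` except `{1}`; hence `⟪χ, ψ⟫ = 1 + p β` with `β`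
an algebraic integer, and this is nonzero because `1 / p` is not an algebraic integer. So there
is at most one `φ`-invariant character. `FPdim` is `φ`-invariant by uniqueness of positive
characters, and so is each of its Galois conjugates; hence all of them equal `FPdim`, whose
values are therefore rational algebraic integers. The same orbit decomposition applied to
`FPdim(x)²` gives `FPdim(R) ≡ 1 (mod p)`.
-/

open Finset

/-- A fusion ring with basis indexed by `Fin n`, given by its structure
constants `c`, distinguished unit basis element `one`, and duality `dual`. -/
structure FusionData (n : ℕ) where
  c : Fin n → Fin n → Fin n → ℕ
  one : Fin n
  dual : Fin n → Fin n
  dual_dual : ∀ i, dual (dual i) = i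
  c_one_left : ∀ i k, c one i k = if k = i then 1 else 0
  c_one_right : ∀ i k, c i one k = if k = i then 1 else 0
  c_dual : ∀ i j, c i j one = if j = dual i then 1 else 0
  assoc : ∀ i j l m, ∑ k, c i j k * c k l m = ∑ k, c j l k * c i k m

/-- `d` is the Frobenius–Perron dimension function: the (unique) ring
homomorphism `R → ℝ` positive on the basis. -/
def FusionData.IsFPdim {n : ℕ} (F : FusionData n) (d : Fin n → ℝ) : Prop :=
  (∀ i, 0 < d i) ∧ ∀ i j, d i * d j = ∑ k, (F.c i j k : ℝ) * d k

/-- `φ` is a fusion-ring automorphism: a permutation of the basis fixing the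
unit and preserving the structure constants. -/
def FusionData.IsAut {n : ℕ} (F : FusionData n) (φ : Equiv.Perm (Fin n)) : Prop :=
  φ F.one = F.one ∧ ∀ i j k, F.c (φ i) (φ j) (φ k) = F.c i j k

/-- `φ` is fixed-point-free: the unit is its only fixed basis element. -/
def FusionData.Fpf {n : ℕ} (F : FusionData n) (φ : Equiv.Perm (Fin n)) : Prop :=
  ∀ i, φ i = i → i = F.one

/-- A character of the fusion ring: a unital ring homomorphism `R → ℂ`,
recorded via its values on the basis. -/
def FusionData.IsChar {n : ℕ} (F : FusionData n) (χ : Fin n → ℂ) : Prop :=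
  χ F.one = 1 ∧ ∀ i j, χ i * χ j = ∑ k, (F.c i j k : ℂ) * χ k

namespace Equiv.Perm

variable {α : Type*} {φ : Perm α}

theorem SameCycle.of_forall_apply [Finite α] {P : α → Prop} (hP : ∀ i, P i → P (φ i))
    {a b : α} (h : φ.SameCycle a b) (ha : P a) : P b := by
  obtain ⟨k, rfl⟩ := h.exists_nat_pow_eq
  clear h
  induction k with
  | zero => exact ha
  | succ k ih => rw [pow_succ', mul_apply]; exact hP _ ih

variable [Fintype α] [DecidableEq α]

theorem card_support_cycleOf_of_pow_prime {p : ℕ} (hp : p.Prime) (hφ : φ ^ p = 1) {a : α}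
    (ha : φ a ≠ a) : #(φ.cycleOf a).support = p := by
  rw [← (isCycle_cycleOf φ ha).orderOf]
  refine (hp.eq_one_or_self_of_dvd _ ((orderOf_cycleOf_dvd_orderOf φ a).trans
    (orderOf_dvd_of_pow_eq_one hφ))).resolve_left ?_
  rw [orderOf_eq_one_iff, cycleOf_eq_one_iff]
  exact ha

/-- `r` is a set of representatives of the `φ`-orbits in `s`, each of which has `p` elements. -/
theorem exists_sum_eq_prime_nsmul_sum {M : Type*} [AddCommMonoid M] {p : ℕ} (hp : p.Prime)
    (hφ : φ ^ p = 1) {g : α → M} (hg : ∀ i, g (φ i) = g i) (s : Finset α)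
    (hs : ∀ i ∈ s, φ i ∈ s) (hfree : ∀ i ∈ s, φ i ≠ i) :
    ∃ r ⊆ s, ∑ i ∈ s, g i = p • ∑ i ∈ r, g i := by
  induction s using Finset.strongInduction with
  | H s ih =>
  obtain rfl | ⟨a, ha⟩ := s.eq_empty_or_nonempty
  · exact ⟨∅, subset_rfl, by simp⟩
  set C := (φ.cycleOf a).support
  have hC : ∀ {b}, b ∈ C ↔ φ.SameCycle a b := mem_support_cycleOf_iff' (hfree a ha)
  have haC : a ∈ C := hC.mpr (SameCycle.refl _ _)
  have hCs : C ⊆ s := fun b hb => (hC.mp hb).of_forall_apply hs ha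
  have hsumC : ∑ i ∈ C, g i = p • g a := by
    rw [sum_congr rfl fun b hb => (hC.mp hb).of_forall_apply (P := (g · = g a))
      (fun i hi => (hg i).trans hi) rfl, sum_const, card_support_cycleOf_of_pow_prime hp hφ
      (hfree a ha)]
  obtain ⟨r, hr, hsum⟩ := ih (s \ C) (sdiff_ssubset hCs ⟨a, haC⟩)
    (fun i hi => mem_sdiff.mpr ⟨hs i (mem_sdiff.mp hi).1,
      fun h => (mem_sdiff.mp hi).2 (hC.mpr (sameCycle_apply_right.mp (hC.mp h)))⟩)
    (fun i hi => hfree i (mem_sdiff.mp hi).1)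
  have har : a ∉ r := fun h => (mem_sdiff.mp (hr h)).2 haC
  refine ⟨insert a r, insert_subset ha (hr.trans sdiff_subset), ?_⟩
  rw [← sum_sdiff hCs, hsum, hsumC, sum_insert har, smul_add, add_comm]

end Equiv.Perm

theorem one_add_natCast_mul_ne_zero_of_isIntegral {K : Type*} [Field K] [CharZero K] {β : K}
    (hβ : IsIntegral ℤ β) {p : ℕ} (hp : p ≠ 1) : 1 + p * β ≠ 0 := by
  intro h
  have hp0 : (p : K) ≠ 0 := by rintro hp0; simp [hp0] at h
  have hβq : β = algebraMap ℚ K (-(p : ℚ)⁻¹) := by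
    simp only [map_neg, map_inv₀, map_natCast]
    field_simp
    linear_combination h
  rw [hβq, isIntegral_algebraMap_iff (algebraMap ℚ K).injective,
    IsIntegrallyClosed.isIntegral_iff] at hβ
  obtain ⟨m, hm⟩ := hβ
  rw [eq_intCast] at hm
  have hm' : (p : ℤ) * -m = 1 := by
    have : ((p * -m : ℤ) : ℚ) = 1 := by
      push_cast
      rw [hm, neg_neg, mul_inv_cancel₀ (by exact_mod_cast hp0)]
    exact_mod_cast this
  exact hp (by exact_mod_cast Int.eq_one_of_mul_eq_one_right (Int.natCast_nonneg p) hm')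

open Polynomial in
theorem mem_range_algebraMap_of_forall_aeval_minpoly_eq {K L : Type*} [Field K]
    [PerfectField K] [Field L] [IsAlgClosed L] [Algebra K L] {x : L} (hx : IsIntegral K x)
    (h : ∀ z : L, aeval z (minpoly K x) = 0 → z = x) : x ∈ (algebraMap K L).range := by
  rw [← minpoly.natDegree_eq_one_iff]
  have hcard := card_rootSet_eq_natDegree (K := L)
    (PerfectField.separable_of_irreducible (minpoly.irreducible hx)) (IsAlgClosed.splits _)
  have : Fintype.card ((minpoly K x).rootSet L) ≤ 1 :=
    Fintype.card_le_one_iff.mpr fun z w => Subtype.ext <| by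
      rw [h z ((mem_rootSet.mp z.2).2), h w ((mem_rootSet.mp w.2).2)]
  have := minpoly.natDegree_pos hx
  omega

namespace FusionData

variable {n : ℕ} (F : FusionData n)

theorem eq_dual_comm {i j : Fin n} : i = F.dual j ↔ j = F.dual i :=
  ⟨fun h => by rw [h, F.dual_dual], fun h => by rw [h, F.dual_dual]⟩

theorem dual_one : F.dual F.one = F.one := by
  have h := F.c_dual F.one F.one
  rw [F.c_one_left, if_pos rfl] at h
  by_contra hne
  rw [if_neg (Ne.symm hne)] at h
  exact one_ne_zero h

theorem c_dual_right (i j l : Fin n) : F.c i j (F.dual l) = F.c j l (F.dual i) := by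
  simpa [F.c_dual, F.eq_dual_comm (i := l)] using F.assoc i j l F.one

theorem c_rotate (i j k : Fin n) : F.c i j k = F.c (F.dual k) i (F.dual j) := by
  rw [← F.c_dual_right, ← F.c_dual_right, F.dual_dual]

section Pairing

variable {R : Type*} [CommSemiring R]

def IsMultiplicative (χ : Fin n → R) : Prop :=
  ∀ i j, χ i * χ j = ∑ k, (F.c i j k : R) * χ k

def pairing (χ ψ : Fin n → R) : R :=
  ∑ i, χ i * ψ (F.dual i)

variable {F} {χ ψ : Fin n → R}

theorem IsMultiplicative.sum_c_mul_dual (hψ : F.IsMultiplicative ψ) (a k : Fin n) :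
    ∑ i, (F.c a i k : R) * ψ (F.dual i) = ψ (F.dual k) * ψ a := by
  simp only [F.c_rotate a]
  exact (Equiv.sum_comp (Function.Involutive.toPerm F.dual F.dual_dual)
    (fun j => (F.c (F.dual k) a j : R) * ψ j)).trans (hψ _ _).symm

theorem IsMultiplicative.mul_pairing (hχ : F.IsMultiplicative χ) (hψ : F.IsMultiplicative ψ)
    (a : Fin n) : χ a * F.pairing χ ψ = ψ a * F.pairing χ ψ := by
  calc χ a * F.pairing χ ψ = ∑ i, ∑ k, χ k * ((F.c a i k : R) * ψ (F.dual i)) := by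
        simp only [pairing, mul_sum, ← mul_assoc, hχ a, sum_mul]
        exact sum_congr rfl fun i _ => sum_congr rfl fun k _ => by ring
    _ = ∑ k, χ k * (ψ (F.dual k) * ψ a) := by
        rw [sum_comm]; simp only [← mul_sum, hψ.sum_c_mul_dual]
    _ = ψ a * F.pairing χ ψ := by
        simp only [pairing, mul_sum]
        exact sum_congr rfl fun k _ => by ring

theorem IsMultiplicative.eq_of_pairing_ne_zero [IsDomain R] (hχ : F.IsMultiplicative χ)
    (hψ : F.IsMultiplicative ψ) (h : F.pairing χ ψ ≠ 0) : χ = ψ :=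
  funext fun a => mul_right_cancel₀ h (hχ.mul_pairing hψ a)

theorem IsMultiplicative.map {S : Type*} [CommSemiring S] (hχ : F.IsMultiplicative χ)
    (f : R →+* S) : F.IsMultiplicative (f ∘ χ) := fun i j => by
  rw [Function.comp_apply, Function.comp_apply, ← map_mul, hχ i j, map_sum]
  simp only [map_mul, map_natCast, Function.comp_apply]

end Pairing

variable {F} {φ : Equiv.Perm (Fin n)} {d : Fin n → ℝ}

/-- The `ℤ`-span of the values of `χ` is a finitely generated module stable under
multiplication by each `χ i`. -/
theorem IsMultiplicative.isIntegral {R : Type*} [CommRing R] [IsDomain R] {χ : Fin n → R}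
    (hχ : F.IsMultiplicative χ) (h0 : χ ≠ 0) (i : Fin n) : IsIntegral ℤ (χ i) := by
  refine isIntegral_of_smul_mem_submodule (Submodule.span ℤ (Set.range χ)) ?_
    (Submodule.fg_span (Set.finite_range χ)) _ fun x hx => ?_
  · obtain ⟨j, hj⟩ := Function.ne_iff.mp h0
    rw [Ne, Submodule.span_eq_bot]
    exact fun h => hj (h _ (Set.mem_range_self j))
  · induction hx using Submodule.span_induction with
    | mem x hx =>
      obtain ⟨j, rfl⟩ := hx
      rw [smul_eq_mul, hχ]
      refine Submodule.sum_mem _ fun k _ => ?_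
      rw [← nsmul_eq_mul]
      exact Submodule.smul_of_tower_mem _ _ (Submodule.subset_span (Set.mem_range_self k))
    | zero => simp
    | add x y _ _ hx hy => rw [smul_add]; exact add_mem hx hy
    | smul a x _ hx => rw [smul_comm]; exact Submodule.smul_mem _ a hx

theorem IsAut.map_dual (hA : F.IsAut φ) (i : Fin n) : φ (F.dual i) = F.dual (φ i) := by
  have h := hA.2 i (F.dual i) F.one
  rw [hA.1, F.c_dual, F.c_dual, if_pos rfl] at h
  by_contra hne
  rw [if_neg hne] at h
  exact zero_ne_one h

theorem IsMultiplicative.comp_aut {R : Type*} [CommSemiring R] {χ : Fin n → R}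
    (hχ : F.IsMultiplicative χ) (hA : F.IsAut φ) : F.IsMultiplicative (χ ∘ φ) := fun i j => by
  rw [Function.comp_apply, Function.comp_apply, hχ, ← Equiv.sum_comp φ]
  simp only [hA.2, Function.comp_apply]

theorem sum_eq_apply_one_add_nsmul {M : Type*} [AddCommMonoid M] {p : ℕ} (hp : p.Prime)
    (h1 : φ F.one = F.one) (hφ : φ ^ p = 1) (hfpf : F.Fpf φ) {g : Fin n → M}
    (hg : ∀ i, g (φ i) = g i) : ∃ r : Finset (Fin n), ∑ i, g i = g F.one + p • ∑ i ∈ r, g i := by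
  obtain ⟨r, -, hr⟩ := φ.exists_sum_eq_prime_nsmul_sum hp hφ hg (univ.erase F.one)
    (fun i hi => mem_erase.mpr ⟨fun h => ne_of_mem_erase hi (φ.injective (h.trans h1.symm)),
      mem_univ _⟩)
    (fun i hi h => ne_of_mem_erase hi (hfpf i h))
  exact ⟨r, by rw [← add_sum_erase _ _ (mem_univ F.one), hr]⟩

theorem IsChar.isMultiplicative {χ : Fin n → ℂ} (hχ : F.IsChar χ) : F.IsMultiplicative χ :=
  hχ.2

theorem IsChar.isIntegral {χ : Fin n → ℂ} (hχ : F.IsChar χ) (i : Fin n) : IsIntegral ℤ (χ i) :=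
  hχ.isMultiplicative.isIntegral (Function.ne_iff.mpr ⟨F.one, by simp [hχ.1]⟩) i

theorem IsChar.eq_of_invariant {p : ℕ} (hp : p.Prime) (hA : F.IsAut φ) (hφ : φ ^ p = 1)
    (hfpf : F.Fpf φ) {χ ψ : Fin n → ℂ} (hχ : F.IsChar χ) (hψ : F.IsChar ψ)
    (hχφ : ∀ i, χ (φ i) = χ i) (hψφ : ∀ i, ψ (φ i) = ψ i) : χ = ψ := by
  obtain ⟨r, hr⟩ := F.sum_eq_apply_one_add_nsmul hp hA.1 hφ hfpf
    (g := fun i => χ i * ψ (F.dual i)) (fun i => by simp only [← hA.map_dual, hχφ, hψφ])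
  refine hχ.isMultiplicative.eq_of_pairing_ne_zero hψ.isMultiplicative ?_
  rw [pairing, hr, hχ.1, F.dual_one, hψ.1, one_mul, nsmul_eq_mul]
  exact one_add_natCast_mul_ne_zero_of_isIntegral
    (IsIntegral.sum _ fun i _ => (hχ.isIntegral i).mul (hψ.isIntegral _)) hp.ne_one

/-- Every conjugate of `χ i` is the value at `i` of a conjugate character `τ ∘ χ`, which is
again `φ`-invariant, hence equal to `χ`. -/
theorem IsChar.mem_range_algebraMap_of_invariant {p : ℕ} (hp : p.Prime) (hA : F.IsAut φ)
    (hφ : φ ^ p = 1) (hfpf : F.Fpf φ) {χ : Fin n → ℂ} (hχ : F.IsChar χ)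
    (hχφ : ∀ i, χ (φ i) = χ i) (i : Fin n) : χ i ∈ (algebraMap ℚ ℂ).range := by
  refine mem_range_algebraMap_of_forall_aeval_minpoly_eq (hχ.isIntegral i).tower_top
    fun z hz => ?_
  set E := IntermediateField.adjoin ℚ (Set.range χ)
  have hmem : ∀ j, χ j ∈ E := fun j => IntermediateField.subset_adjoin _ _ (Set.mem_range_self j)
  obtain ⟨τ, hτ⟩ := IntermediateField.exists_algHom_adjoin_of_splits_of_aeval
    (by rintro _ ⟨j, rfl⟩; exact ⟨(hχ.isIntegral j).tower_top, IsAlgClosed.splits _⟩)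
    (hmem i) hz
  let χE : Fin n → E := fun j => ⟨χ j, hmem j⟩
  have hχE : F.IsMultiplicative χE := fun j k => Subtype.ext (by simpa [χE] using hχ.2 j k)
  have hτχ : F.IsChar (τ ∘ χE) :=
    ⟨(congrArg τ (Subtype.ext hχ.1 : χE F.one = 1)).trans (map_one τ), hχE.map τ.toRingHom⟩
  rw [← hτ]
  exact congrFun (hτχ.eq_of_invariant hp hA hφ hfpf hχ (fun j => by simp [χE, hχφ]) hχφ) i

theorem IsChar.exists_int_of_invariant {p : ℕ} (hp : p.Prime) (hA : F.IsAut φ)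
    (hφ : φ ^ p = 1) (hfpf : F.Fpf φ) {χ : Fin n → ℂ} (hχ : F.IsChar χ)
    (hχφ : ∀ i, χ (φ i) = χ i) (i : Fin n) : ∃ m : ℤ, χ i = m := by
  obtain ⟨q, hq⟩ := hχ.mem_range_algebraMap_of_invariant hp hA hφ hfpf hχφ i
  have hqint : IsIntegral ℤ q :=
    (isIntegral_algebraMap_iff (algebraMap ℚ ℂ).injective).mp (hq ▸ hχ.isIntegral i)
  obtain ⟨m, rfl⟩ := IsIntegrallyClosed.isIntegral_iff.mp hqint
  exact ⟨m, by simpa using hq.symm⟩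

theorem IsFPdim.isMultiplicative (hd : F.IsFPdim d) : F.IsMultiplicative d :=
  hd.2

theorem IsFPdim.unique {d' : Fin n → ℝ} (hd : F.IsFPdim d) (hd' : F.IsFPdim d') : d = d' :=
  hd.isMultiplicative.eq_of_pairing_ne_zero hd'.isMultiplicative
    (sum_pos (fun i _ => mul_pos (hd.1 i) (hd'.1 _)) ⟨F.one, mem_univ _⟩).ne'

theorem IsFPdim.apply_one (hd : F.IsFPdim d) : d F.one = 1 :=
  (mul_eq_left₀ (hd.1 _).ne').mp (by simpa [F.c_one_left] using hd.2 F.one F.one)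

theorem IsFPdim.apply_aut (hd : F.IsFPdim d) (hA : F.IsAut φ) (i : Fin n) : d (φ i) = d i :=
  congrFun (IsFPdim.unique ⟨fun i => hd.1 (φ i), hd.isMultiplicative.comp_aut hA⟩ hd) i

theorem IsFPdim.exists_int {p : ℕ} (hp : p.Prime) (hA : F.IsAut φ) (hφ : φ ^ p = 1)
    (hfpf : F.Fpf φ) (hd : F.IsFPdim d) (i : Fin n) : ∃ m : ℤ, d i = m := by
  have hχ : F.IsChar (Complex.ofRealHom ∘ d) :=
    ⟨by simp [hd.apply_one], hd.isMultiplicative.map Complex.ofRealHom⟩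
  obtain ⟨m, hm⟩ := hχ.exists_int_of_invariant hp hA hφ hfpf (fun j => by
    simp [hd.apply_aut hA]) i
  exact ⟨m, Complex.ofReal_injective (by simpa using hm)⟩

end FusionData

theorem stmt1 {n p : ℕ} (hp : p.Prime) (F : FusionData n)
    (φ : Equiv.Perm (Fin n)) (hA : F.IsAut φ) (hord : orderOf φ = p)
    (hfpf : F.Fpf φ) (d : Fin n → ℝ) (hd : F.IsFPdim d) :
    (∀ i, ∃ m : ℤ, d i = (m : ℝ)) ∧
      ∃ N : ℤ, (∑ i, d i ^ 2) = (N : ℝ) ∧ N % (p : ℤ) = 1 := by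
  have hφ : φ ^ p = 1 := hord ▸ pow_orderOf_eq_one φ
  choose m hm using hd.exists_int hp hA hφ hfpf
  have hmφ : ∀ i, m (φ i) ^ 2 = m i ^ 2 := fun i => by
    have h := hd.apply_aut hA i
    rw [hm, hm] at h
    rw [Int.cast_inj.mp h]
  obtain ⟨r, hr⟩ := F.sum_eq_apply_one_add_nsmul hp hA.1 hφ hfpf (g := fun i => m i ^ 2) hmφ
  have hm1 : m F.one = 1 := by exact_mod_cast (hm _).symm.trans hd.apply_one
  refine ⟨fun i => ⟨m i, hm i⟩, ∑ i, m i ^ 2, by push_cast [hm]; rfl, ?_⟩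
  rw [hr, hm1, one_pow, nsmul_eq_mul, Int.add_mul_emod_self_left]
  exact Int.emod_eq_of_lt zero_le_one (by exact_mod_cast hp.one_lt)
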